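/- For every n ≥ 3, the rainbow extremal number of the 4-edge path in the n-dimensional hypercube satisfies ex*(Q_n, P_4) = 3·2^{n-1}. -/

import Mathlib

open SimpleGraph

/-- An edge coloring is proper on `H` if distinct edges of `H` sharing a vertex
receive different colors. -/
def IsProperEdgeColoring {V : Type*} (H : SimpleGraph V) (c : Sym2 V → ℕ) : Prop :=
  ∀ ⦃e₁ : Sym2 V⦄, e₁ ∈ H.edgeSet → ∀ ⦃e₂ : Sym2 V⦄, e₂ ∈ H.edgeSet →
    e₁ ≠ e₂ → (∃ v, v ∈ e₁ ∧ v ∈ e₂) → c e₁ ≠ c e₂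

/-- The graph `H`, edge colored by `c`, contains a rainbow copy of `F`:
there is an (injective) copy of `F` in `H` all of whose edges receive
pairwise distinct colors. -/
def HasRainbowCopy {V W : Type*} (H : SimpleGraph V) (c : Sym2 V → ℕ)
    (F : SimpleGraph W) : Prop :=
  ∃ f : W ↪ V, (∀ ⦃a b : W⦄, F.Adj a b → H.Adj (f a) (f b)) ∧
    ∀ ⦃a b a' b' : W⦄, F.Adj a b → F.Adj a' b' → s(a, b) ≠ s(a', b') →
      c s(f a, f b) ≠ c s(f a', f b')

/-- `H` admits a proper edge coloring with no rainbow copy of `F`. -/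
def RainbowFree {V W : Type*} (H : SimpleGraph V) (F : SimpleGraph W) : Prop :=
  ∃ c : Sym2 V → ℕ, IsProperEdgeColoring H c ∧ ¬ HasRainbowCopy H c F

/-- The rainbow extremal number `ex*(G,F)`: the maximum number of edges of a
subgraph `H` of `G` admitting a proper edge coloring with no rainbow copy of `F`. -/
noncomputable def rainbowExtremalNumber {V W : Type*} [Fintype V]
    (G : SimpleGraph V) (F : SimpleGraph W) : ℕ :=
  sSup {m | ∃ H : SimpleGraph V, H ≤ G ∧ RainbowFree H F ∧ m = H.edgeSet.ncard}

/-- The minimum degree of a subgraph, taken over its own vertex set. -/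
noncomputable def subMinDegree {V : Type*} {G : SimpleGraph V} (H : G.Subgraph) : ℕ :=
  sInf {d | ∃ v ∈ H.verts, d = (H.neighborSet v).ncard}

/-- `δ*(G,F)`: the maximum of the minimum degree over all subgraphs `H` of `G`
admitting a proper edge coloring with no rainbow copy of `F`. -/
noncomputable def rainbowMinDegree {V W : Type*} [Fintype V]
    (G : SimpleGraph V) (F : SimpleGraph W) : ℕ :=
  sSup {m | ∃ H : G.Subgraph, RainbowFree H.spanningCoe F ∧ m = subMinDegree H}

/-- The `n`-dimensional hypercube graph `Q_n`. -/
def cubeGraph (n : ℕ) : SimpleGraph (Fin n → Bool) where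
  Adj x y := {i | x i ≠ y i}.ncard = 1
  symm := by
    constructor
    intro x y h
    have h : {i | x i ≠ y i}.ncard = 1 := h
    show {i | y i ≠ x i}.ncard = 1
    have hs : {i | y i ≠ x i} = {i | x i ≠ y i} := by ext i; simp [ne_comm]
    rw [hs]; exact h
  loopless := by
    constructor
    intro x h
    simp at h

/-- The star `K_{1,k}` with `k` edges. -/
def starGraph (k : ℕ) : SimpleGraph (Fin (k + 1)) where
  Adj i j := i ≠ j ∧ (i = 0 ∨ j = 0)
  symm := by constructor; intro i j h; exact ⟨h.1.symm, h.2.symm⟩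
  loopless := by constructor; intro i h; exact h.1 rfl

/-- `G` contains a copy of `F` as a subgraph. -/
def ContainsCopy {V W : Type*} (G : SimpleGraph V) (F : SimpleGraph W) : Prop :=
  ∃ f : W ↪ V, ∀ ⦃a b : W⦄, F.Adj a b → G.Adj (f a) (f b)


/-!
Upper bound. Let `H ⊆ Q_n` carry a proper colouring with no rainbow `P₄`, and call a vertex of
degree at least 4 a hub. If `y` is a hub and `y v u x` is a walk with `x` not adjacent to `y`,
then `c(ux) = c(yv)`: otherwise one of the at least three other edges at `y` avoids the colours
`c(ux)` and `c(uv)` and completes a rainbow `P₄`. As `Q_n` is triangle-free and two of its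
vertices have at most two common neighbours, this forces every `u ≠ y` reached from a hub by a
walk `y v u` to have degree at most 2. So a non-hub has at most one hub neighbour, and a degree-3
neighbour of a hub has two further neighbours of degree at most 2 and without hub neighbours.
Double counting gives `∑_{hubs} (deg y - 1) ≤ #{v | deg v ≤ 2}`, so the average degree is at
most 3.

Lower bound. The edges of `Q_n` in three fixed directions form a 3-regular subgraph, and
colouring each edge by its direction uses only three colours.
-/

open Finset

section RainbowPath

variable {V : Type*} {H : SimpleGraph V} {c : Sym2 V → ℕ}

theorem pathGraph_adj_iff_exists {k : ℕ} {a b : Fin (k + 1)} :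
    (pathGraph (k + 1)).Adj a b ↔
      ∃ m < k, (a : ℕ) = m ∧ (b : ℕ) = m + 1 ∨ (b : ℕ) = m ∧ (a : ℕ) = m + 1 := by
  rw [pathGraph_adj]
  constructor
  · rintro (h | h)
    · exact ⟨a, by omega, .inl ⟨rfl, h.symm⟩⟩
    · exact ⟨b, by omega, .inr ⟨rfl, h.symm⟩⟩
  · rintro ⟨m, -, ⟨ha, hb⟩ | ⟨hb, ha⟩⟩ <;> omega

theorem SimpleGraph.Walk.IsPath.hasRainbowCopy {u v : V} {p : H.Walk u v} (hp : p.IsPath)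
    (hc : (p.edges.map c).Nodup) : HasRainbowCopy H c (pathGraph (p.length + 1)) := by
  have edge : ∀ {a b : Fin (p.length + 1)}, (pathGraph _).Adj a b → ∃ m < p.length,
      ((a : ℕ) = m ∧ (b : ℕ) = m + 1 ∨ (b : ℕ) = m ∧ (a : ℕ) = m + 1) ∧
      s(p.getVert a, p.getVert b) = s(p.getVert m, p.getVert (m + 1)) := by
    intro a b hab
    obtain ⟨m, hm, ⟨ha, hb⟩ | ⟨hb, ha⟩⟩ := pathGraph_adj_iff_exists.1 hab
    · exact ⟨m, hm, .inl ⟨ha, hb⟩, by rw [ha, hb]⟩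
    · exact ⟨m, hm, .inr ⟨hb, ha⟩, by rw [ha, hb, Sym2.eq_swap]⟩
  refine ⟨⟨fun i => p.getVert i, fun i j h => Fin.ext <| hp.getVert_injOn
    (Nat.lt_succ_iff.1 i.isLt) (Nat.lt_succ_iff.1 j.isLt) h⟩, fun a b hab => ?_, ?_⟩
  · obtain ⟨m, hm, -, he⟩ := edge hab
    change s(p.getVert a, p.getVert b) ∈ H.edgeSet
    rw [he]
    exact p.adj_getVert_succ hm
  · intro a b a' b' hab hab' hne
    obtain ⟨m, hm, hab, he⟩ := edge hab
    obtain ⟨m', hm', hab', he'⟩ := edge hab'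
    change c s(p.getVert a, p.getVert b) ≠ c s(p.getVert a', p.getVert b')
    rw [he, he']
    have hmm' : m ≠ m' := by
      rintro rfl
      apply hne
      rw [Sym2.eq_iff, Fin.ext_iff, Fin.ext_iff, Fin.ext_iff, Fin.ext_iff]
      omega
    intro h
    apply hmm'
    refine (hc.getElem_inj_iff (i := m) (j := m') (hi := by simpa) (hj := by simpa)).1 ?_
    simpa [SimpleGraph.Walk.getElem_edges] using h

theorem IsProperEdgeColoring.color_ne (hc : IsProperEdgeColoring H c) {x y z : V}
    (hxy : H.Adj x y) (hyz : H.Adj y z) (hxz : x ≠ z) : c s(x, y) ≠ c s(y, z) :=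
  hc hxy hyz (by simp [hxz, hxy.ne]) ⟨y, Sym2.mem_mk_right x y, Sym2.mem_mk_left y z⟩

theorem IsProperEdgeColoring.injOn_neighborSet (hc : IsProperEdgeColoring H c) (y : V) :
    Set.InjOn (fun t => c s(y, t)) (H.neighborSet y) := by
  intro t ht t' ht' h
  by_contra hne
  exact hc.color_ne ((show H.Adj y t from ht).symm) ht' hne (by rwa [Sym2.eq_swap])

theorem IsProperEdgeColoring.exists_adj_notMem [Fintype V] [DecidableRel H.Adj]
    (hc : IsProperEdgeColoring H c) {y : V} (T : Finset V) (S : Finset ℕ)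
    (h : #T + #S < H.degree y) : ∃ t, H.Adj y t ∧ t ∉ T ∧ c s(y, t) ∉ S := by
  classical
  have hinj : Set.InjOn (fun t => c s(y, t)) ↑(H.neighborFinset y \ T) := fun t ht t' ht' =>
    hc.injOn_neighborSet y (by simpa using (mem_sdiff.1 ht).1) (by simpa using (mem_sdiff.1 ht').1)
  have hcard : #S < #((H.neighborFinset y \ T).image fun t => c s(y, t)) := by
    rw [card_image_of_injOn hinj]
    have := le_card_sdiff T (H.neighborFinset y)
    rw [card_neighborFinset_eq_degree] at this
    omega
  obtain ⟨_, himage, hS⟩ := exists_mem_notMem_of_card_lt_card hcard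
  obtain ⟨t, ht, rfl⟩ := mem_image.1 himage
  obtain ⟨hyt, hT⟩ := mem_sdiff.1 ht
  exact ⟨t, (mem_neighborFinset _ _ _).1 hyt, hT, hS⟩

end RainbowPath

/-- Call a vertex of degree at least `4` a hub. -/
def IsHubSparse {V : Type*} [Fintype V] (H : SimpleGraph V) [DecidableRel H.Adj] : Prop :=
  ∀ ⦃y v u : V⦄, 4 ≤ H.degree y → H.Adj y v → H.Adj v u → u ≠ y → H.degree u ≤ 2

section HubSparse

variable {V : Type*} [Fintype V] {H : SimpleGraph V} [DecidableRel H.Adj]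

theorem color_eq_of_not_adj (h3 : H.CliqueFree 3) {c : Sym2 V → ℕ}
    (hc : IsProperEdgeColoring H c) (hnr : ¬ HasRainbowCopy H c (pathGraph 5)) {y v u x : V}
    (hy : 4 ≤ H.degree y) (hyv : H.Adj y v) (hvu : H.Adj v u) (hux : H.Adj u x)
    (hyx : ¬ H.Adj y x) : c s(u, x) = c s(y, v) := by
  classical
  by_contra hne
  have hyu : ¬ H.Adj y u := fun h =>
    isIndepSet_neighborSet_of_triangleFree _ h3 v hyv.symm hvu h.ne h
  obtain ⟨t, hyt, htv, htc⟩ := hc.exists_adj_notMem {v} {c s(u, x), c s(v, u)}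
    (lt_of_lt_of_le (by grind [card_singleton, card_le_two]) hy)
  simp only [mem_singleton, mem_insert, not_or, Sym2.eq_swap (a := y) (b := t)] at htv htc
  have hyu' : y ≠ u := by rintro rfl; exact hyx hux
  have hvx : v ≠ x := by rintro rfl; exact hyx hyv
  let p : H.Walk t x := .cons hyt.symm (.cons hyv (.cons hvu (.cons hux .nil)))
  have hp : p.IsPath := by
    simp only [p, Walk.cons_isPath_iff, Walk.support_cons, Walk.support_nil, List.mem_cons,
      List.not_mem_nil, or_false, Walk.IsPath.nil, true_and, not_or]
    refine ⟨⟨⟨hux.ne, hvu.ne, hvx⟩, hyv.ne, hyu', ?_⟩, hyt.ne.symm, htv, ?_, ?_⟩ <;> rintro rfl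
    exacts [hyu hux.symm, hyu hyt, hyx hyt]
  refine hnr (hp.hasRainbowCopy ?_)
  simp only [p, Walk.edges_cons, Walk.edges_nil, List.map_cons, List.map_nil, List.nodup_cons,
    List.mem_cons, List.not_mem_nil, or_false, not_or, List.nodup_nil, and_true, not_false_eq_true]
  exact ⟨⟨hc.color_ne hyt.symm hyv htv, htc.2, htc.1⟩,
    ⟨hc.color_ne hyv hvu hyu', Ne.symm hne⟩, hc.color_ne hvu hux hvx⟩

theorem isHubSparse_of_rainbowFree (h3 : H.CliqueFree 3)
    (hcommon : ∀ a b, a ≠ b → (H.commonNeighbors a b).ncard ≤ 2)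
    (hH : RainbowFree H (pathGraph 5)) : IsHubSparse H := by
  classical
  obtain ⟨c, hc, hnr⟩ := hH
  intro y v u hy hyv hvu huy
  by_contra! hu
  have key : ∀ ⦃x₁ x₂⦄, H.Adj u x₁ → H.Adj u x₂ → x₁ ≠ x₂ → x₁ ≠ v → ¬ H.Adj y x₂ → False := by
    intro x₁ x₂ h₁ h₂ h12 h1v hy2
    have hc₂ := color_eq_of_not_adj h3 hc hnr hy hyv hvu h₂ hy2
    by_cases hy1 : H.Adj y x₁
    · have := color_eq_of_not_adj h3 hc hnr hy hy1 h₁.symm h₂ hy2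
      exact hc.color_ne hyv.symm hy1 (Ne.symm h1v) (by rw [Sym2.eq_swap, ← hc₂, this])
    · have := color_eq_of_not_adj h3 hc hnr hy hyv hvu h₁ hy1
      exact hc.color_ne h₁.symm h₂ h12 (by rw [Sym2.eq_swap, this, hc₂])
  have hv : v ∈ H.neighborFinset u := (mem_neighborFinset _ _ _).2 hvu.symm
  obtain ⟨x₁, hx₁, x₂, hx₂, h12⟩ := one_lt_card.1 <| show 1 < #((H.neighborFinset u).erase v) by
    rw [card_erase_of_mem hv, card_neighborFinset_eq_degree]; omega
  simp only [mem_erase, mem_neighborFinset] at hx₁ hx₂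
  by_cases both : H.Adj y x₁ ∧ H.Adj y x₂
  · have hsub : ({v, x₁, x₂} : Set V) ⊆ H.commonNeighbors u y := by
      simp only [Set.insert_subset_iff, Set.singleton_subset_iff, mem_commonNeighbors]
      exact ⟨⟨hvu.symm, hyv⟩, ⟨hx₁.2, both.1⟩, ⟨hx₂.2, both.2⟩⟩
    have hcard : ({v, x₁, x₂} : Set V).ncard = 3 :=
      Set.ncard_eq_three.2 ⟨v, x₁, x₂, hx₁.1.symm, hx₂.1.symm, h12, rfl⟩
    have := Set.ncard_le_ncard hsub
    have := hcommon u y huy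
    omega
  · rcases not_and_or.1 both with h | h
    exacts [key hx₂.2 hx₁.2 (Ne.symm h12) hx₂.1 h, key hx₁.2 hx₂.2 h12 hx₁.1 h]

namespace IsHubSparse

theorem eq_of_adj (hH : IsHubSparse H) {v y₁ y₂ : V} (h₁ : H.Adj v y₁) (h₂ : H.Adj v y₂)
    (hy₁ : 4 ≤ H.degree y₁) (hy₂ : 4 ≤ H.degree y₂) : y₁ = y₂ := by
  by_contra hne
  have := hH hy₁ h₁.symm h₂ (Ne.symm hne)
  omega

theorem sum_degree_sub_one_le (hH : IsHubSparse H) :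
    ∑ y with 4 ≤ H.degree y, (H.degree y - 1) ≤
      #{v | H.degree v < 4 ∧ ∃ y, H.Adj v y ∧ 4 ≤ H.degree y} := by
  classical
  set B : Finset V := {y | 4 ≤ H.degree y}
  set N : Finset V := {v | H.degree v < 4 ∧ ∃ y, H.Adj v y ∧ 4 ≤ H.degree y}
  calc ∑ y ∈ B, (H.degree y - 1)
      ≤ ∑ y ∈ B, #(N.bipartiteAbove H.Adj y) := sum_le_sum fun y hy => ?_
    _ = ∑ v ∈ N, #(B.bipartiteBelow H.Adj v) :=
      sum_card_bipartiteAbove_eq_sum_card_bipartiteBelow _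
    _ ≤ ∑ v ∈ N, 1 := sum_le_sum fun v _ => card_le_one.2 fun y₁ h₁ y₂ h₂ => by
      simp only [bipartiteBelow, B, mem_filter, mem_univ, true_and] at h₁ h₂
      exact hH.eq_of_adj h₁.2.symm h₂.2.symm h₁.1 h₂.1
    _ = #N := by rw [sum_const, smul_eq_mul, mul_one]
  simp only [B, mem_filter, mem_univ, true_and] at hy
  have hbig : #((H.neighborFinset y).filter (4 ≤ H.degree ·)) ≤ 1 :=
    card_le_one.2 fun y₁ h₁ y₂ h₂ => by
      simp only [mem_filter, mem_neighborFinset] at h₁ h₂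
      exact hH.eq_of_adj h₁.1 h₂.1 h₁.2 h₂.2
  have hsmall : (H.neighborFinset y).filter (¬ 4 ≤ H.degree ·) ⊆ N.bipartiteAbove H.Adj y := by
    intro v hv
    simp only [mem_filter, mem_neighborFinset, not_le] at hv
    simp only [bipartiteAbove, N, mem_filter, mem_univ, true_and]
    exact ⟨⟨hv.2, y, hv.1.symm, hy⟩, hv.1⟩
  have hsplit := card_filter_add_card_filter_not (s := H.neighborFinset y) (4 ≤ H.degree ·)
  rw [card_neighborFinset_eq_degree] at hsplit
  have := card_le_card hsmall
  omega

theorem card_le_card_degree_le_two (hH : IsHubSparse H) :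
    #{v | H.degree v < 4 ∧ ∃ y, H.Adj v y ∧ 4 ≤ H.degree y} ≤ #{v | H.degree v ≤ 2} := by
  classical
  set N : Finset V := {v | H.degree v < 4 ∧ ∃ y, H.Adj v y ∧ 4 ≤ H.degree y}
  set L : Finset V := {v | H.degree v ≤ 2}
  have hNL : N.filter (H.degree · ≤ 2) = L.filter (· ∈ N) := by
    ext v
    simp only [N, L, mem_filter, mem_univ, true_and]
    constructor <;> rintro ⟨h₁, h₂⟩ <;> exact ⟨h₂, h₁⟩
  -- The two non-hub neighbours of a degree-3 vertex of `N` have degree at most 2 and lie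
  -- outside `N`.
  have hrelay : #(N.filter (¬ H.degree · ≤ 2)) * 2 ≤ #(L.filter (· ∉ N)) * 2 := by
    refine card_mul_le_card_mul H.Adj (fun v hv => ?_) (fun u hu => ?_)
    · simp only [N, mem_filter, mem_univ, true_and, not_le] at hv
      obtain ⟨⟨hv4, y, hvy, hy⟩, hv2⟩ := hv
      have hsub : (H.neighborFinset v).erase y ⊆ (L.filter (· ∉ N)).bipartiteAbove H.Adj v := by
        intro u hu
        simp only [mem_erase, mem_neighborFinset] at hu
        have hu2 := hH hy hvy.symm hu.2 hu.1
        simp only [bipartiteAbove, N, L, mem_filter, mem_univ, true_and, not_and, not_exists]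
        refine ⟨⟨hu2, fun _ z huz hz => ?_⟩, hu.2⟩
        have := hH hz huz.symm hu.2.symm (by rintro rfl; omega)
        omega
      have := card_le_card hsub
      rw [card_erase_of_mem ((mem_neighborFinset _ _ _).2 hvy), card_neighborFinset_eq_degree]
        at this
      omega
    · simp only [L, mem_filter, mem_univ, true_and] at hu
      calc #(_ : Finset V) ≤ #(H.neighborFinset u) := card_le_card fun v hv => by
            simp only [bipartiteBelow, mem_filter] at hv
            exact (mem_neighborFinset _ _ _).2 hv.2.symm
        _ ≤ 2 := by rw [card_neighborFinset_eq_degree]; exact hu.1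
  have hN := card_filter_add_card_filter_not (s := N) (H.degree · ≤ 2)
  have hL := card_filter_add_card_filter_not (s := L) (· ∈ N)
  rw [hNL] at hN
  omega

theorem sum_degrees_le (hH : IsHubSparse H) : ∑ v, H.degree v ≤ 3 * Fintype.card V := by
  classical
  have hpt : ∀ v, H.degree v + (if H.degree v ≤ 2 then 1 else 0) ≤
      3 + (if 4 ≤ H.degree v then H.degree v - 1 else 0) := fun v => by split_ifs <;> omega
  have := sum_le_sum fun v (_ : v ∈ univ) => hpt v
  rw [sum_add_distrib, sum_add_distrib, ← card_filter, ← sum_filter, sum_const, card_univ,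
    smul_eq_mul] at this
  have := hH.sum_degree_sub_one_le
  have := hH.card_le_card_degree_le_two
  omega

end IsHubSparse

end HubSparse

namespace Cube

variable {n : ℕ}

def flipAt (x : Fin n → Bool) (i : Fin n) : Fin n → Bool := Function.update x i (!x i)

@[simp] theorem flipAt_flipAt_self (x : Fin n → Bool) (i : Fin n) : flipAt (flipAt x i) i = x := by
  simp [flipAt]

theorem flipAt_ne_self (x : Fin n → Bool) (i : Fin n) : flipAt x i ≠ x := fun h => by
  simpa [flipAt] using congrFun h i

theorem flipAt_injective (x : Fin n → Bool) : Function.Injective (flipAt x) := by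
  intro i j h
  by_contra hij
  simpa [flipAt, Function.update_of_ne hij] using congrFun h i

theorem flipAt_flipAt_ne_iff {x : Fin n → Bool} {i j : Fin n} (hij : i ≠ j) (m : Fin n) :
    flipAt (flipAt x i) j m ≠ x m ↔ m = i ∨ m = j := by
  by_cases hi : m = i <;> by_cases hj : m = j <;> simp_all [flipAt, Function.update_apply]

theorem cubeGraph_adj_iff {x y : Fin n → Bool} : (cubeGraph n).Adj x y ↔ ∃ i, y = flipAt x i := by
  change {i | x i ≠ y i}.ncard = 1 ↔ _
  simp only [Set.ncard_eq_one, Set.ext_iff, funext_iff, flipAt, Function.update_apply,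
    Set.mem_ofPred_eq, Set.mem_singleton_iff]
  refine exists_congr fun i => forall_congr' fun j => ?_
  rcases eq_or_ne j i with rfl | hj <;> cases x j <;> cases y j <;> simp_all

def parity (x : Fin n → Bool) : ZMod 2 := ∑ i, ((x i).toNat : ZMod 2)

theorem parity_flipAt (x : Fin n → Bool) (i : Fin n) : parity (flipAt x i) = parity x + 1 := by
  rw [parity, parity, ← add_sum_erase _ _ (mem_univ i), ← add_sum_erase _ _ (mem_univ i),
    sum_congr rfl fun j hj => by rw [flipAt, Function.update_of_ne (ne_of_mem_erase hj)],
    flipAt, Function.update_self]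
  generalize ∑ j ∈ univ.erase i, ((x j).toNat : ZMod 2) = s
  cases x i <;> revert s <;> decide

theorem cubeGraph_cliqueFree_three : (cubeGraph n).CliqueFree 3 :=
  (Coloring.mk parity fun h => by
    obtain ⟨i, rfl⟩ := cubeGraph_adj_iff.1 h
    simp [parity_flipAt]).colorable.cliqueFree (by simp)

theorem ncard_commonNeighbors_le_two {a b : Fin n → Bool} (hab : a ≠ b) :
    ((cubeGraph n).commonNeighbors a b).ncard ≤ 2 := by
  rcases Set.eq_empty_or_nonempty ((cubeGraph n).commonNeighbors a b) with h | ⟨w₀, hw₀⟩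
  · simp [h]
  have key : ∀ w ∈ (cubeGraph n).commonNeighbors a b,
      ∃ k l, k ≠ l ∧ w = flipAt a k ∧ b = flipAt (flipAt a k) l := by
    intro w hw
    rw [mem_commonNeighbors] at hw
    obtain ⟨k, rfl⟩ := cubeGraph_adj_iff.1 hw.1
    obtain ⟨l, rfl⟩ := cubeGraph_adj_iff.1 hw.2.symm
    refine ⟨k, l, ?_, rfl, rfl⟩
    rintro rfl
    simp at hab
  obtain ⟨i, j, hij, -, hb⟩ := key w₀ hw₀
  have hsub : (cubeGraph n).commonNeighbors a b ⊆ {flipAt a i, flipAt a j} := by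
    intro w hw
    obtain ⟨k, l, hkl, rfl, hb'⟩ := key w hw
    have hk : b k ≠ a k := by rw [hb']; exact (flipAt_flipAt_ne_iff hkl k).2 (.inl rfl)
    rw [hb, flipAt_flipAt_ne_iff hij] at hk
    rcases hk with rfl | rfl <;> simp
  exact (Set.ncard_le_ncard hsub).trans <| (Set.ncard_insert_le _ _).trans (by simp)

theorem two_mul_ncard_edgeSet_le {H : SimpleGraph (Fin n → Bool)} (hle : H ≤ cubeGraph n)
    (hH : RainbowFree H (pathGraph 5)) : 2 * H.edgeSet.ncard ≤ 3 * 2 ^ n := by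
  classical
  have hcommon (a b : Fin n → Bool) (hab : a ≠ b) : (H.commonNeighbors a b).ncard ≤ 2 :=
    (Set.ncard_le_ncard fun _ hv => (mem_commonNeighbors _).2
      (((mem_commonNeighbors _).1 hv).imp (@hle _ _) (@hle _ _))).trans
      (ncard_commonNeighbors_le_two hab)
  have := (isHubSparse_of_rainbowFree (cubeGraph_cliqueFree_three.anti hle) hcommon hH)
    |>.sum_degrees_le
  rwa [sum_degrees_eq_twice_card_edges, ← Set.ncard_coe_finset, coe_edgeFinset, Fintype.card_fun,
    Fintype.card_bool, Fintype.card_fin] at this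

def directionSubgraph (k n : ℕ) : SimpleGraph (Fin n → Bool) where
  Adj x y := ∃ i : Fin n, (i : ℕ) < k ∧ y = flipAt x i
  symm := ⟨fun x _ ⟨i, hi, h⟩ => ⟨i, hi, by rw [h, flipAt_flipAt_self]⟩⟩
  loopless := ⟨fun x ⟨i, _, h⟩ => flipAt_ne_self x i h.symm⟩

variable {k : ℕ}

theorem directionSubgraph_le_cubeGraph : directionSubgraph k n ≤ cubeGraph n :=
  fun _ _ ⟨i, _, h⟩ => cubeGraph_adj_iff.2 ⟨i, h⟩

theorem directionSubgraph_degree [DecidableRel (directionSubgraph k n).Adj]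
    (x : Fin n → Bool) : (directionSubgraph k n).degree x = min n k := by
  have : (directionSubgraph k n).neighborFinset x =
      ({i : Fin n | (i : ℕ) < k} : Finset (Fin n)).image (flipAt x) := by
    ext y
    rw [mem_neighborFinset]
    simp [directionSubgraph, eq_comm]
  rw [← card_neighborFinset_eq_degree, this, card_image_of_injective _ (flipAt_injective x),
    Fin.card_filter_val_lt]

theorem two_mul_ncard_edgeSet_directionSubgraph :
    2 * (directionSubgraph k n).edgeSet.ncard = 2 ^ n * min n k := by
  classical
  rw [← coe_edgeFinset, Set.ncard_coe_finset, ← sum_degrees_eq_twice_card_edges]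
  simp [directionSubgraph_degree]

/-- On an edge of the cube the sum has a single term, the flipped coordinate. -/
def direction : Sym2 (Fin n → Bool) → ℕ :=
  Sym2.lift ⟨fun x y => ∑ i with x i ≠ y i, (i : ℕ), fun x y => by simp_rw [ne_comm]⟩

theorem direction_flipAt (x : Fin n → Bool) (i : Fin n) : direction s(x, flipAt x i) = i := by
  have : univ.filter (fun j => x j ≠ flipAt x i j) = {i} := by
    ext j
    rw [mem_filter, mem_singleton]
    rcases eq_or_ne j i with rfl | hj <;> simp [flipAt, *]
  rw [direction, Sym2.lift_mk]
  simp only [this, sum_singleton]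

theorem exists_eq_flipAt_of_mem_edgeSet {e : Sym2 (Fin n → Bool)}
    (he : e ∈ (directionSubgraph k n).edgeSet) {w : Fin n → Bool} (hw : w ∈ e) :
    ∃ i : Fin n, (i : ℕ) < k ∧ e = s(w, flipAt w i) := by
  induction e using Sym2.inductionOn with | hf x y =>
  rw [mem_edgeSet] at he
  rcases Sym2.mem_iff.1 hw with rfl | rfl
  · obtain ⟨i, hi, rfl⟩ := he
    exact ⟨i, hi, rfl⟩
  · obtain ⟨i, hi, rfl⟩ := he.symm
    exact ⟨i, hi, Sym2.eq_swap⟩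

theorem direction_isProperEdgeColoring :
    IsProperEdgeColoring (directionSubgraph k n) direction := by
  rintro e₁ he₁ e₂ he₂ hne ⟨w, hw₁, hw₂⟩ h
  obtain ⟨i, -, rfl⟩ := exists_eq_flipAt_of_mem_edgeSet he₁ hw₁
  obtain ⟨j, -, rfl⟩ := exists_eq_flipAt_of_mem_edgeSet he₂ hw₂
  rw [direction_flipAt, direction_flipAt] at h
  exact hne (by rw [Fin.ext h])

theorem not_hasRainbowCopy_directionSubgraph :
    ¬ HasRainbowCopy (directionSubgraph k n) direction (pathGraph (k + 2)) := by
  rintro ⟨f, hadj, hrb⟩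
  have hpath (i : Fin (k + 1)) : (pathGraph (k + 2)).Adj i.castSucc i.succ := by
    simp [pathGraph_adj]
  have hlt (i : Fin (k + 1)) : direction s(f i.castSucc, f i.succ) < k := by
    obtain ⟨m, hm, h⟩ := hadj (hpath i)
    rwa [h, direction_flipAt]
  have hinj : Function.Injective fun i => (⟨_, hlt i⟩ : Fin k) := by
    intro i j hij
    by_contra hne
    refine hrb (hpath i) (hpath j) ?_ (Fin.ext_iff.1 hij)
    simp only [ne_eq, Sym2.eq_iff, Fin.ext_iff, Fin.val_castSucc, Fin.val_succ] at hne ⊢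
    omega
  simpa using Fintype.card_le_of_injective _ hinj

end Cube

/-- For every `n ≥ 3`, `ex*(Q_n, P_4) = 3 · 2^(n-1)`. -/
theorem stmt6 (n : ℕ) (hn : 3 ≤ n) :
    rainbowExtremalNumber (cubeGraph n) (SimpleGraph.pathGraph 5) = 3 * 2 ^ (n - 1) := by
  have hpow : 2 ^ n = 2 * 2 ^ (n - 1) := by rw [← pow_succ']; congr; omega
  refine IsGreatest.csSup_eq ⟨⟨Cube.directionSubgraph 3 n, Cube.directionSubgraph_le_cubeGraph,
    ⟨Cube.direction, Cube.direction_isProperEdgeColoring,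
      Cube.not_hasRainbowCopy_directionSubgraph⟩, ?_⟩, ?_⟩
  · have := Cube.two_mul_ncard_edgeSet_directionSubgraph (k := 3) (n := n)
    rw [min_eq_right hn] at this
    omega
  · rintro _ ⟨H, hle, hH, rfl⟩
    have := Cube.two_mul_ncard_edgeSet_le hle hH
    omega
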